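/- For every t ∈ ℝ and every τ ∈ ℂ, the function x ↦ exp(−t x²)·G(x)·cosh(τ x) is integrable on the interval (0, ∞); in particular M_t(1) = ∫₀^∞ exp(−t x²) G(x) cosh(x) dx is finite. -/

import Mathlib

open MeasureTheory

/-- `G x = Σ_{m=1}^∞ (2π²m⁴ e^{9x} − 3πm² e^{5x}) e^{−πm² e^{4x}}`. -/
noncomputable def G (x : ℝ) : ℝ :=
  ∑' m : ℕ, (2 * Real.pi ^ 2 * ((m : ℝ) + 1) ^ 4 * Real.exp (9 * x)
      - 3 * Real.pi * ((m : ℝ) + 1) ^ 2 * Real.exp (5 * x))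
    * Real.exp (-(Real.pi * ((m : ℝ) + 1) ^ 2 * Real.exp (4 * x)))

/-- `M t τ = ∫₀^∞ e^{−t x²} G x cosh (τ x) dx`. -/
noncomputable def M (t : ℝ) (τ : ℂ) : ℂ :=
  ∫ x in Set.Ioi (0 : ℝ),
    ((Real.exp (-(t * x ^ 2)) * G x : ℝ) : ℂ) * Complex.cosh (τ * (x : ℂ))

/-- `Ξ t λ = ∫₀^∞ e^{−t x²} G x cos (λ x) dx`. -/
noncomputable def Xi (t : ℝ) (l : ℂ) : ℂ :=
  ∫ x in Set.Ioi (0 : ℝ),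
    ((Real.exp (-(t * x ^ 2)) * G x : ℝ) : ℂ) * Complex.cos (l * (x : ℂ))

/-- `α t γ = (1/(2γ)!) ∫₀^∞ e^{−t x²} G x x^{2γ} dx`. -/
noncomputable def α (t : ℝ) (γ : ℕ) : ℝ :=
  (1 / (Nat.factorial (2 * γ) : ℝ)) *
    ∫ x in Set.Ioi (0 : ℝ), Real.exp (-(t * x ^ 2)) * G x * x ^ (2 * γ)

/-!
For `x ≥ 0` each term of `G` is dominated by `m⁴ e^{-πm²/2} · e^{9x - (π/2)e^{4x}}`, because
`πm²e^{4x} ≥ (π/2)(m² + e^{4x})`; so `G` decays doubly exponentially. As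
`|cosh (τx)| ≤ e^{|τ|x}`, the integrand is dominated by a multiple of
`exp (|t|x² + (9 + |τ|)x - (π/2)e^{4x})`, which is `O(e^{-x})`.
-/

open Real Filter Set MeasureTheory Asymptotics

noncomputable def GTerm (x : ℝ) (m : ℕ) : ℝ :=
  (2 * π ^ 2 * ((m : ℝ) + 1) ^ 4 * exp (9 * x) - 3 * π * ((m : ℝ) + 1) ^ 2 * exp (5 * x))
    * exp (-(π * ((m : ℝ) + 1) ^ 2 * exp (4 * x)))

lemma G_eq_tsum_GTerm (x : ℝ) : G x = ∑' m, GTerm x m := rfl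

lemma summable_pow_mul_exp_neg_mul_sq (k : ℕ) {c : ℝ} (hc : 0 < c) :
    Summable fun m : ℕ => ((m : ℝ) + 1) ^ k * exp (-(c * ((m : ℝ) + 1) ^ 2)) := by
  have hlin := (summable_nat_add_iff 1).mpr (summable_pow_mul_exp_neg_nat_mul k hc)
  refine hlin.of_nonneg_of_le (fun m => by positivity) fun m => ?_
  have hm : (1 : ℝ) ≤ (m : ℝ) + 1 := by simp
  push_cast
  gcongr
  nlinarith [mul_le_mul_of_nonneg_left (le_self_pow₀ hm two_ne_zero) hc.le]

lemma abs_GTerm_le (x : ℝ) (m : ℕ) :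
    |GTerm x m| ≤ (2 * π ^ 2 * exp (9 * x) + 3 * π * exp (5 * x)) *
      (((m : ℝ) + 1) ^ 4 * exp (-(π * exp (4 * x) * ((m : ℝ) + 1) ^ 2))) := by
  have hm : (1 : ℝ) ≤ (m : ℝ) + 1 := by simp
  have hsq : ((m : ℝ) + 1) ^ 2 ≤ ((m : ℝ) + 1) ^ 4 := pow_le_pow_right₀ hm (by norm_num)
  rw [GTerm, abs_mul, abs_of_pos (exp_pos _)]
  calc _ ≤ (2 * π ^ 2 * ((m : ℝ) + 1) ^ 4 * exp (9 * x)
          + 3 * π * ((m : ℝ) + 1) ^ 2 * exp (5 * x)) *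
          exp (-(π * ((m : ℝ) + 1) ^ 2 * exp (4 * x))) := by
        gcongr
        exact (abs_sub _ _).trans_eq (by rw [abs_of_nonneg (by positivity),
          abs_of_nonneg (by positivity)])
    _ ≤ _ := by
        rw [mul_right_comm π]
        have hdecay : 0 ≤ 3 * π * exp (5 * x) * exp (-(π * exp (4 * x) * ((m : ℝ) + 1) ^ 2)) := by
          positivity
        nlinarith [mul_le_mul_of_nonneg_left hsq hdecay]

lemma summable_GTerm (x : ℝ) : Summable (GTerm x) :=
  .of_norm_bounded (((summable_pow_mul_exp_neg_mul_sq 4 (by positivity)).mul_left _))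
    (abs_GTerm_le x)

lemma abs_GTerm_le_of_nonneg {x : ℝ} (hx : 0 ≤ x) (m : ℕ) :
    |GTerm x m| ≤ (2 * π ^ 2 + 3 * π) *
      (((m : ℝ) + 1) ^ 4 * exp (-(π / 2 * ((m : ℝ) + 1) ^ 2))) *
      exp (9 * x - π / 2 * exp (4 * x)) := by
  have hm : (1 : ℝ) ≤ ((m : ℝ) + 1) ^ 2 := one_le_pow₀ (by simp)
  have he : 1 ≤ exp (4 * x) := one_le_exp (by linarith)
  have h59 : exp (5 * x) ≤ exp (9 * x) := exp_le_exp.2 (by linarith)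
  -- `a + b ≤ 2ab` for `a, b ≥ 1`
  have hsplit : π / 2 * ((m : ℝ) + 1) ^ 2 + π / 2 * exp (4 * x)
      ≤ π * exp (4 * x) * ((m : ℝ) + 1) ^ 2 := by
    nlinarith [mul_nonneg (sub_nonneg.2 hm) (sub_nonneg.2 he), pi_pos]
  refine (abs_GTerm_le x m).trans ?_
  calc _ ≤ ((2 * π ^ 2 + 3 * π) * exp (9 * x)) *
        (((m : ℝ) + 1) ^ 4 * exp (-(π / 2 * ((m : ℝ) + 1) ^ 2) - π / 2 * exp (4 * x))) := by
        gcongr 1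
        · nlinarith [pi_pos]
        · gcongr; linarith
    _ = _ := by rw [sub_eq_add_neg, exp_add, sub_eq_add_neg, exp_add]; ring

lemma exists_abs_G_le : ∃ C, ∀ x, 0 ≤ x → |G x| ≤ C * exp (9 * x - π / 2 * exp (4 * x)) := by
  have hs := summable_pow_mul_exp_neg_mul_sq 4 (half_pos pi_pos)
  refine ⟨(2 * π ^ 2 + 3 * π) * ∑' m : ℕ, ((m : ℝ) + 1) ^ 4 *
    exp (-(π / 2 * ((m : ℝ) + 1) ^ 2)), fun x hx => ?_⟩
  rw [G_eq_tsum_GTerm, ← norm_eq_abs, ← tsum_mul_left, ← tsum_mul_right]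
  exact tsum_of_norm_bounded ((hs.mul_left _).mul_right _).hasSum (abs_GTerm_le_of_nonneg hx)

@[fun_prop]
lemma measurable_G : Measurable G :=
  measurable_of_tendsto_metrizable (f := fun N x => ∑ m ∈ Finset.range N, GTerm x m)
    (fun N => Finset.measurable_sum _ fun m _ => by unfold GTerm; fun_prop)
    (tendsto_pi_nhds.2 fun x => (summable_GTerm x).hasSum.tendsto_sum_nat)

lemma Complex.norm_cosh_le_exp_norm (z : ℂ) : ‖Complex.cosh z‖ ≤ Real.exp ‖z‖ := by
  have hexp (w : ℂ) : ‖Complex.exp w‖ ≤ Real.exp ‖w‖ := by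
    rw [Complex.norm_exp]; exact Real.exp_le_exp.2 (Complex.re_le_norm w)
  have htwo : 2 * ‖Complex.cosh z‖ = ‖Complex.exp z + Complex.exp (-z)‖ := by
    rw [← Complex.two_cosh, norm_mul, Complex.norm_two]
  have hneg := hexp (-z)
  rw [norm_neg] at hneg
  linarith [norm_add_le (Complex.exp z) (Complex.exp (-z)), hexp z]

lemma integrableOn_exp_quadratic_sub_exp (a b : ℝ) {c d : ℝ} (hc : 0 < c) (hd : 0 < d) (s : ℝ) :
    IntegrableOn (fun x => exp (a * x ^ 2 + b * x - c * exp (d * x))) (Ioi s) := by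
  have hpoly : (fun x : ℝ => a * x ^ 2 + (b + 1) * x) =o[atTop] fun x => exp (d * x) :=
    ((isLittleO_pow_exp_pos_mul_atTop 2 hd).const_mul_left a).add
      (by simpa using (isLittleO_pow_exp_pos_mul_atTop 1 hd).const_mul_left (b + 1))
  refine integrable_of_isBigO_exp_neg one_pos (by fun_prop) (IsBigO.of_bound 1 ?_)
  filter_upwards [hpoly.bound hc] with x hx
  rw [norm_of_nonneg (exp_pos _).le, norm_of_nonneg (exp_pos _).le, one_mul, exp_le_exp]
  rw [norm_of_nonneg (exp_pos _).le] at hx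
  linarith [le_abs_self (a * x ^ 2 + (b + 1) * x), norm_eq_abs (a * x ^ 2 + (b + 1) * x)]

/-- the integrand of `M t τ` is integrable on `(0, ∞)` for every `τ`;
in particular `M t 1 = ∫₀^∞ e^{−t x²} G x cosh x dx` is finite. -/
theorem M_integrand_integrable (t : ℝ) (τ : ℂ) :
    MeasureTheory.IntegrableOn
      (fun x : ℝ => ((Real.exp (-(t * x ^ 2)) * G x : ℝ) : ℂ) * Complex.cosh (τ * (x : ℂ)))
      (Set.Ioi (0 : ℝ)) := by
  obtain ⟨C, hC⟩ := exists_abs_G_le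
  have hmaj :=
    (integrableOn_exp_quadratic_sub_exp |t| (9 + ‖τ‖) (half_pos pi_pos) four_pos 0).const_mul C
  refine hmaj.mono' (Measurable.aestronglyMeasurable (by fun_prop)) ?_
  rw [ae_restrict_iff' measurableSet_Ioi]
  filter_upwards with x (hx : 0 < x)
  have hG := hC x hx.le
  have hcosh : ‖Complex.cosh (τ * x)‖ ≤ exp (‖τ‖ * x) := by
    simpa [abs_of_pos hx] using Complex.norm_cosh_le_exp_norm (τ * x)
  have ht : exp (-(t * x ^ 2)) ≤ exp (|t| * x ^ 2) := by
    gcongr; nlinarith [neg_abs_le t, sq_nonneg x]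
  calc _ = exp (-(t * x ^ 2)) * |G x| * ‖Complex.cosh (τ * x)‖ := by
        rw [norm_mul, Complex.norm_real, norm_mul, norm_of_nonneg (exp_pos _).le, norm_eq_abs]
    _ ≤ exp (|t| * x ^ 2) * (C * exp (9 * x - π / 2 * exp (4 * x))) * exp (‖τ‖ * x) := by
        gcongr
        exact mul_nonneg (exp_pos _).le ((abs_nonneg _).trans hG)
    _ = _ := by
        rw [mul_left_comm, mul_assoc, ← exp_add, ← exp_add]; ring_nf
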